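/- arXiv:math/0303267 — 4 statements merged into one kernel-verified Lean document; each statement's English description precedes it below -/
import Mathlib

section
/- For every even natural number n ≥ 2, there are no tremolo permutations of 0, 1, …, n+1 beginning with 1 and ending with 0; that is, the set of bijections f : Fin (n+2) → Fin (n+2) with f 0 = 1, f (n+1) = 0, and alternating consecutive differences is empty, so J n = 0. -/
/-- A permutation `f` of `{0, 1, ..., n+1}` is *tremolo* when consecutive differences in the
list `f 0, f 1, ..., f (n+1)` alternate in sign. -/
def IsTremolo {n : ℕ} (f : Equiv.Perm (Fin (n + 2))) : Prop :=
  ∀ i : ℕ, ∀ _ : i + 2 ≤ n + 1,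
    (f ⟨i, by omega⟩ < f ⟨i + 1, by omega⟩ ↔ ¬ f ⟨i + 1, by omega⟩ < f ⟨i + 2, by omega⟩)

/-- `J n` is the number of tremolo permutations of `0, 1, ..., n+1` that begin with `1`
and end with `0`. -/
noncomputable def J (n : ℕ) : ℕ :=
  Nat.card {f : Equiv.Perm (Fin (n + 2)) //
    IsTremolo f ∧ f 0 = 1 ∧ f (Fin.last (n + 1)) = 0}

/-! Since `f 0 = 1` and `0` is taken only at the end, `f 1 > 1`, so the first step is an ascent.
Alternation then makes the step from position `i` an ascent exactly when `i` is even; for even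
`n` the last step, into the value `0`, would have to be an ascent, which is impossible. -/

namespace IsTremolo

variable {n : ℕ} {f : Equiv.Perm (Fin (n + 2))}

theorem lt_succ_iff_even (hf : IsTremolo f) (h01 : f 0 < f 1) :
    ∀ i (hi : i ≤ n), f ⟨i, by omega⟩ < f ⟨i + 1, by omega⟩ ↔ Even i
  | 0, _ => by simpa using h01
  | i + 1, hi => by
    rw [Nat.even_add_one, ← lt_succ_iff_even hf h01 i (by omega)]
    have := hf i (by omega)
    tauto

end IsTremolo

theorem Equiv.Perm.apply_zero_lt_apply_one {m : ℕ} {f : Equiv.Perm (Fin (m + 2))}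
    (h0 : f 0 = 1) (h1 : f 1 ≠ 0) : f 0 < f 1 := by
  have h1' : f 1 ≠ 1 := fun h => absurd (f.injective (h.trans h0.symm)) (by simp)
  rw [h0, Fin.lt_def]
  rw [Ne, Fin.ext_iff] at h1 h1'
  simp only [Fin.val_zero, Fin.val_one] at h1 h1' ⊢
  omega

/-- For every even `n ≥ 2` there are no tremolo permutations of `0, 1, ..., n+1` beginning
with `1` and ending with `0`: the set of such permutations is empty, so `J n = 0`. -/
theorem J_eq_zero_of_even (n : ℕ) (hn : 2 ≤ n) (he : Even n) :
    IsEmpty {f : Equiv.Perm (Fin (n + 2)) //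
      IsTremolo f ∧ f 0 = 1 ∧ f (Fin.last (n + 1)) = 0} ∧ J n = 0 := by
  have hE : IsEmpty {f : Equiv.Perm (Fin (n + 2)) //
      IsTremolo f ∧ f 0 = 1 ∧ f (Fin.last (n + 1)) = 0} := by
    refine ⟨fun ⟨f, hf, h0, hlast⟩ => ?_⟩
    have h1 : f 1 ≠ 0 := hlast ▸ f.injective.ne (by
      simp only [Ne, Fin.ext_iff, Fin.val_last, Fin.val_one]; omega)
    have hn_lt : f ⟨n, by omega⟩ < f (Fin.last (n + 1)) :=
      (hf.lt_succ_iff_even (f.apply_zero_lt_apply_one h0 h1) n le_rfl).2 he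
    exact Fin.not_lt_zero _ (hlast ▸ hn_lt)
  exact ⟨hE, Nat.card_of_isEmpty⟩
end

section
/- Let t n denote the n-th iterated derivative of the real tangent function at 0, i.e. t n = iteratedDeriv n Real.tan 0. Then t 0 = 0, t 1 = 1, and for every natural number n ≥ 1, t (n+1) = ∑_{m=0}^{n} (n.choose m) * t m * t (n−m). -/
open Topology Finset

theorem iteratedDeriv_succ_of_deriv_eq_one_add_mul_self {𝕜 : Type*} [NontriviallyNormedField 𝕜]
    {f : 𝕜 → 𝕜} {x : 𝕜} {n : ℕ} (hn : 1 ≤ n) (hf : ContDiffAt 𝕜 n f x)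
    (hf' : deriv f =ᶠ[𝓝 x] fun y ↦ 1 + f y * f y) :
    iteratedDeriv (n + 1) f x =
      ∑ m ∈ range (n + 1), (n.choose m : 𝕜) * iteratedDeriv m f x * iteratedDeriv (n - m) f x :=
  calc iteratedDeriv (n + 1) f x
      = iteratedDeriv n (fun y ↦ 1 + f y * f y) x := by
        rw [iteratedDeriv_succ', hf'.iteratedDeriv_eq]
    _ = iteratedDeriv n (fun y ↦ f y * f y) x := iteratedDeriv_const_add hn 1
    _ = _ := iteratedDeriv_fun_mul hf hf

theorem Real.deriv_tan_eventuallyEq {x : ℝ} (hx : Real.cos x ≠ 0) :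
    deriv Real.tan =ᶠ[𝓝 x] fun y ↦ 1 + Real.tan y * Real.tan y := by
  filter_upwards [Real.continuous_cos.continuousAt.eventually_ne hx] with y hy
  rw [Real.deriv_tan, ← sq, one_div, ← Real.inv_one_add_tan_sq hy, inv_inv]

/-- Let `t n = iteratedDeriv n Real.tan 0`. Then `t 0 = 0`, `t 1 = 1`, and for all `n ≥ 1`,
`t (n+1) = ∑_{m=0}^{n} C(n, m) * t m * t (n - m)`. -/
theorem tan_iteratedDeriv_recurrence :
    iteratedDeriv 0 Real.tan 0 = 0 ∧ iteratedDeriv 1 Real.tan 0 = 1 ∧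
      ∀ n : ℕ, 1 ≤ n →
        iteratedDeriv (n + 1) Real.tan 0 =
          ∑ m ∈ Finset.range (n + 1),
            (n.choose m : ℝ) * iteratedDeriv m Real.tan 0 *
              iteratedDeriv (n - m) Real.tan 0 := by
  have hcos : Real.cos 0 ≠ 0 := by simp
  refine ⟨by simp, by simp [Real.deriv_tan], fun n hn ↦ ?_⟩
  exact iteratedDeriv_succ_of_deriv_eq_one_add_mul_self hn (Real.contDiffAt_tan.2 hcos)
    (Real.deriv_tan_eventuallyEq hcos)
end

section
/- Let B : ℕ → ℕ → ℝ satisfy the Boustrophedon recurrence: B 0 0 = 1, B (n+1) 0 = 0 for all n, and B (n+1) (k+1) = B (n+1) k + B n (n − k) for all n and all k ≤ n. Then for every odd natural number n, the diagonal entry B n n equals the n-th iterated derivative of the tangent function at 0: B n n = iteratedDeriv n Real.tan 0. -/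
/-!
The diagonal `B n n` of the Boustrophedon triangle is read off from the double exponential
generating function `(cos x + sin y) / cos (x + y)`: its mixed derivatives `∂ₓᵃ ∂ᵧᵇ` at the
origin obey the Boustrophedon recurrence, with `(a, b)` standing for the entry `B (a + b) b`,
because `∂ᵧ - ∂ₓ` kills `cos (x + y)` and turns `cos x + sin y` into `sin x + cos y`.
At `(0, n)` this derivative is `sec⁽ⁿ⁾ 0 + tan⁽ⁿ⁾ 0`, and `sec⁽ⁿ⁾ 0 = 0` for odd `n`.
-/

open Finset Real

lemma eq_of_boustrophedon_recurrence {α : Type*} [Zero α] [One α] [Add α] {B E : ℕ → ℕ → α}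
    (h0 : B 0 0 = 1) (hrow : ∀ n, B (n + 1) 0 = 0)
    (hrec : ∀ n k, k ≤ n → B (n + 1) (k + 1) = B (n + 1) k + B n (n - k))
    (hE0 : E 0 0 = 1) (hErow : ∀ a, E (a + 1) 0 = 0)
    (hErec : ∀ a b, E a (b + 1) = E (a + 1) b + E b a) (a b : ℕ) :
    B (a + b) b = E a b := by
  induction h : a + b generalizing a b with
  | zero =>
    obtain ⟨rfl, rfl⟩ : a = 0 ∧ b = 0 := by omega
    exact h0.trans hE0.symm
  | succ n ih =>
    induction b generalizing a with
    | zero =>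
      obtain rfl : a = n + 1 := by omega
      rw [hrow, hErow]
    | succ b ihb =>
      rw [hrec n b (by omega), show n - b = a by omega, ihb (a + 1) (by omega), ih b a (by omega),
        hErec]

section BinomConv

variable {R : Type*}

/-- If `u` and `v` are the derivative sequences of `f` and `g` at a point, then `binomConv u v a b`
is the `a`-th derivative at that point of `f * g⁽ᵇ⁾` (Leibniz rule). -/
def binomConv [Semiring R] (u v : ℕ → R) (a b : ℕ) : R :=
  ∑ j ∈ range (a + 1), (a.choose j : R) * (u j * v (a - j + b))

@[simp]
lemma binomConv_zero_left [Semiring R] (u v : ℕ → R) (b : ℕ) :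
    binomConv u v 0 b = u 0 * v b := by
  simp [binomConv]

lemma binomConv_succ_left [Semiring R] (u v : ℕ → R) (a b : ℕ) :
    binomConv u v (a + 1) b = binomConv u v a (b + 1) + binomConv (fun j => u (j + 1)) v a b := by
  rw [binomConv, show a + 1 + 1 = a + 2 from rfl,
    sum_choose_succ_mul (fun i k => u i * v (k + b)) a]
  congr 1
  refine sum_congr rfl fun j hj => ?_
  rw [show a + 1 - j + b = a - j + (b + 1) by grind]

lemma binomConv_neg_left [Ring R] (u v : ℕ → R) (a b : ℕ) :
    binomConv (fun j => -u j) v a b = -binomConv u v a b := by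
  simp [binomConv, ← sum_neg_distrib]

end BinomConv

lemma iteratedDeriv_mul_eq_binomConv {𝕜 𝔸 : Type*} [NontriviallyNormedField 𝕜] [NormedRing 𝔸]
    [NormedAlgebra 𝕜 𝔸] {f g : 𝕜 → 𝔸} {x : 𝕜} {n : ℕ} (hf : ContDiffAt 𝕜 n f x)
    (hg : ContDiffAt 𝕜 n g x) :
    iteratedDeriv n (f * g) x = binomConv (iteratedDeriv · f x) (iteratedDeriv · g x) n 0 := by
  simp [iteratedDeriv_mul hf hg, binomConv, mul_assoc]

lemma Function.Even.iteratedDeriv_zero_eq_zero {𝕜 F : Type*} [NontriviallyNormedField 𝕜]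
    [CharZero 𝕜] [NormedAddCommGroup F] [NormedSpace 𝕜 F] {f : 𝕜 → F} (hf : f.Even) {n : ℕ}
    (hn : Odd n) : iteratedDeriv n f 0 = 0 := by
  have h := iteratedDeriv_comp_neg n f 0
  simp only [hf _, neg_zero, hn.neg_one_pow, neg_smul, one_smul] at h
  have : IsAddTorsionFree F := .of_isTorsionFree 𝕜 F
  exact self_eq_neg.mp h

/-- `boustrophedonEntry a b` is the mixed derivative `∂ₓᵃ ∂ᵧᵇ` at the origin of
`(cos x + sin y) / cos (x + y)`, expanded by the Leibniz rule. -/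
noncomputable def boustrophedonEntry (a b : ℕ) : ℝ :=
  binomConv (iteratedDeriv · cos 0) (iteratedDeriv · cos⁻¹ 0) a b +
    binomConv (iteratedDeriv · sin 0) (iteratedDeriv · cos⁻¹ 0) b a

lemma binomConv_cos_sec (a : ℕ) :
    binomConv (iteratedDeriv · cos 0) (iteratedDeriv · cos⁻¹ 0) a 0 = if a = 0 then 1 else 0 := by
  have hcos : cos * cos⁻¹ =ᶠ[nhds 0] fun _ => (1 : ℝ) := by
    filter_upwards [continuous_cos.continuousAt.eventually_ne (by simp : cos 0 ≠ 0)] with x hx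
    exact mul_inv_cancel₀ hx
  rw [← iteratedDeriv_mul_eq_binomConv contDiff_cos.contDiffAt
    (contDiff_cos.contDiffAt.inv (by simp)), hcos.iteratedDeriv_eq, iteratedDeriv_const]

lemma iteratedDeriv_tan_zero (n : ℕ) :
    iteratedDeriv n tan 0 = binomConv (iteratedDeriv · sin 0) (iteratedDeriv · cos⁻¹ 0) n 0 := by
  have htan : tan = sin * cos⁻¹ := funext fun x => by simp [tan_eq_sin_div_cos, div_eq_mul_inv]
  rw [htan, iteratedDeriv_mul_eq_binomConv contDiff_sin.contDiffAt
    (contDiff_cos.contDiffAt.inv (by simp))]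

lemma iteratedDeriv_sec_zero_of_odd {n : ℕ} (hn : Odd n) : iteratedDeriv n cos⁻¹ 0 = 0 :=
  Function.Even.iteratedDeriv_zero_eq_zero (fun x => by simp) hn

lemma boustrophedonEntry_zero_zero : boustrophedonEntry 0 0 = 1 := by
  simp [boustrophedonEntry]

lemma boustrophedonEntry_succ_zero (a : ℕ) : boustrophedonEntry (a + 1) 0 = 0 := by
  simp [boustrophedonEntry, binomConv_cos_sec]

lemma boustrophedonEntry_succ_right (a b : ℕ) :
    boustrophedonEntry a (b + 1) = boustrophedonEntry (a + 1) b + boustrophedonEntry b a := by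
  simp only [boustrophedonEntry, binomConv_succ_left, iteratedDeriv_add_one_cos,
    iteratedDeriv_add_one_sin, Pi.neg_apply, binomConv_neg_left]
  ring

/-- If `B` satisfies the Boustrophedon recurrence, then for every odd `n`, the diagonal
entry `B n n` equals the `n`-th iterated derivative of `tan` at `0`. -/
theorem boustrophedon_diagonal_odd_eq_tan (B : ℕ → ℕ → ℝ) (h0 : B 0 0 = 1)
    (hrow : ∀ n : ℕ, B (n + 1) 0 = 0)
    (hrec : ∀ n k : ℕ, k ≤ n → B (n + 1) (k + 1) = B (n + 1) k + B n (n - k))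
    (n : ℕ) (hn : Odd n) :
    B n n = iteratedDeriv n Real.tan 0 := by
  have hB := eq_of_boustrophedon_recurrence h0 hrow hrec boustrophedonEntry_zero_zero
    boustrophedonEntry_succ_zero boustrophedonEntry_succ_right 0 n
  rw [zero_add] at hB
  simp [hB, boustrophedonEntry, iteratedDeriv_sec_zero_of_odd hn, iteratedDeriv_tan_zero]
end

section
/- Let B : ℕ → ℕ → ℝ satisfy the Boustrophedon recurrence: B 0 0 = 1, B (n+1) 0 = 0 for all n, and B (n+1) (k+1) = B (n+1) k + B n (n − k) for all n and all k ≤ n. Then for every even natural number n, the diagonal entry B n n equals the n-th iterated derivative of the secant function at 0: B n n = iteratedDeriv n (fun x => (Real.cos x)⁻¹) 0. -/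
/-!
The function `F x y = (sin x + cos y) / cos (x + y)` satisfies `(∂ₓ - ∂ᵧ) F x y = F y x`
(the denominator is killed by `∂ₓ - ∂ᵧ`) and `F 0 y = 1`. Hence its derivatives
`F_{a,b} = ∂ₓᵃ ∂ᵧᵇ F (0, 0)` satisfy `F_{a+1,b} = F_{a,b+1} + F_{b,a}`, `F_{0,b+1} = 0` and
`F_{0,0} = 1`, which is the Boustrophedon recurrence for `B n k = F_{k,n-k}`. On the diagonal,
`F x 0 = sec x + tan x`, and `tan` is odd, so `B n n = sec⁽ⁿ⁾ 0` for even `n`.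
No two-variable calculus is needed: `F_{a,b}` is given by the Leibniz formula in terms of the
derivatives of `sin`, `cos` and `sec` at `0`.
-/

open Real Finset

structure IsBoustrophedon {R : Type*} [Zero R] [One R] [Add R] (B : ℕ → ℕ → R) : Prop where
  zero_zero : B 0 0 = 1
  succ_zero : ∀ n, B (n + 1) 0 = 0
  succ_succ : ∀ n k, k ≤ n → B (n + 1) (k + 1) = B (n + 1) k + B n (n - k)

theorem IsBoustrophedon.eq {R : Type*} [Zero R] [One R] [Add R] {B B' : ℕ → ℕ → R}
    (hB : IsBoustrophedon B) (hB' : IsBoustrophedon B') {n k : ℕ} (hk : k ≤ n) :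
    B n k = B' n k := by
  induction n generalizing k with
  | zero => rw [Nat.le_zero.mp hk, hB.zero_zero, hB'.zero_zero]
  | succ n ihn =>
    induction k with
    | zero => rw [hB.succ_zero, hB'.succ_zero]
    | succ k ihk =>
      rw [hB.succ_succ n k (by omega), hB'.succ_succ n k (by omega), ihk (by omega),
        ihn (by omega)]

/-- `leibnizSum s c a m` is `∂ₓᵃ ∂ᵧᵐ (f x * g (x + y))` at `0` when `c i` and `s i` are the
`i`-th derivatives of `f` and `g` at `0`. -/
def leibnizSum (s c : ℕ → ℝ) (a m : ℕ) : ℝ :=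
  ∑ i ∈ range (a + 1), (a.choose i : ℝ) * (c i * s (m + (a - i)))

lemma leibnizSum_succ (s c : ℕ → ℝ) (a m : ℕ) :
    leibnizSum s c (a + 1) m =
      leibnizSum s c a (m + 1) + leibnizSum s (fun i => c (i + 1)) a m := by
  rw [leibnizSum, sum_choose_succ_mul (fun i j => c i * s (m + j)), leibnizSum, leibnizSum]
  congr 1
  refine sum_congr rfl fun i hi => ?_
  rw [show m + (a + 1 - i) = m + 1 + (a - i) by have := mem_range.mp hi; omega]

lemma leibnizSum_zero_left (s c : ℕ → ℝ) (m : ℕ) : leibnizSum s c 0 m = c 0 * s m := by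
  simp [leibnizSum]

lemma leibnizSum_neg (s c : ℕ → ℝ) (a m : ℕ) :
    leibnizSum s (fun i => -c i) a m = -leibnizSum s c a m := by
  simp only [leibnizSum, neg_mul, mul_neg, sum_neg_distrib]

/-- The derivatives `∂ₓᵃ ∂ᵧᵇ ((sin x + cos y) * g (x + y))` at `0`, where `s i = g⁽ⁱ⁾ 0`. -/
noncomputable def sinCosArray (s : ℕ → ℝ) (a b : ℕ) : ℝ :=
  leibnizSum s (fun i => iteratedDeriv i sin 0) a b +
    leibnizSum s (fun i => iteratedDeriv i cos 0) b a

lemma sinCosArray_succ_left (s : ℕ → ℝ) (a b : ℕ) :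
    sinCosArray s (a + 1) b = sinCosArray s a (b + 1) + sinCosArray s b a := by
  have hsin : (fun i => iteratedDeriv (i + 1) sin 0) = fun i => iteratedDeriv i cos 0 := by
    funext i; rw [iteratedDeriv_add_one_sin]
  have hcos : (fun i => iteratedDeriv (i + 1) cos 0) = fun i => -iteratedDeriv i sin 0 := by
    funext i; rw [iteratedDeriv_add_one_cos, Pi.neg_apply]
  simp only [sinCosArray, leibnizSum_succ, hsin, hcos, leibnizSum_neg]
  ring

lemma iteratedDeriv_eq_zero_of_odd {f : ℝ → ℝ} (hf : ∀ x, f (-x) = -f x) {n : ℕ}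
    (hn : Even n) : iteratedDeriv n f 0 = 0 := by
  have h := iteratedDeriv_comp_neg n f 0
  simp only [hf, iteratedDeriv_fun_neg, hn.neg_one_pow, one_smul, neg_zero] at h
  linarith

lemma iteratedDeriv_mul_inv_cos {f : ℝ → ℝ} (n : ℕ) (hf : ContDiff ℝ n f) :
    iteratedDeriv n (fun x => f x * (cos x)⁻¹) 0 =
      leibnizSum (fun i => iteratedDeriv i (fun x => (cos x)⁻¹) 0)
        (fun i => iteratedDeriv i f 0) n 0 := by
  rw [iteratedDeriv_fun_mul (g := fun x => (cos x)⁻¹) hf.contDiffAt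
    (contDiff_cos.contDiffAt.inv (by simp))]
  simp only [leibnizSum, zero_add, mul_assoc]

lemma iteratedDeriv_succ_cos_mul_inv_cos (n : ℕ) :
    iteratedDeriv (n + 1) (fun x => cos x * (cos x)⁻¹) 0 = 0 := by
  have hone : (fun x => cos x * (cos x)⁻¹) =ᶠ[nhds 0] fun _ => (1 : ℝ) := by
    filter_upwards [continuous_cos.continuousAt.eventually_ne (by simp : cos 0 ≠ 0)]
      with x hx using mul_inv_cancel₀ hx
  rw [hone.iteratedDeriv_eq, iteratedDeriv_const, if_neg n.succ_ne_zero]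

noncomputable def secArray : ℕ → ℕ → ℝ :=
  sinCosArray fun i => iteratedDeriv i (fun x => (cos x)⁻¹) 0

lemma isBoustrophedon_secArray : IsBoustrophedon fun n k => secArray k (n - k) where
  zero_zero := by simp [secArray, sinCosArray, leibnizSum_zero_left]
  succ_zero n := by
    have h := iteratedDeriv_mul_inv_cos (n + 1) contDiff_cos
    rw [iteratedDeriv_succ_cos_mul_inv_cos] at h
    simp only [secArray, sinCosArray, Nat.sub_zero, leibnizSum_zero_left, ← h, iteratedDeriv_zero,
      sin_zero, zero_mul, zero_add]
  succ_succ n k hk := by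
    rw [show n + 1 - (k + 1) = n - k by omega, show n + 1 - k = n - k + 1 by omega,
      show n - (n - k) = k by omega, secArray, sinCosArray_succ_left]

lemma secArray_zero_right_of_even {n : ℕ} (hn : Even n) :
    secArray n 0 = iteratedDeriv n (fun x => (cos x)⁻¹) 0 := by
  have htan : iteratedDeriv n (fun x => sin x * (cos x)⁻¹) 0 = 0 :=
    iteratedDeriv_eq_zero_of_odd (fun x => by rw [sin_neg, cos_neg, neg_mul]) hn
  rw [iteratedDeriv_mul_inv_cos n contDiff_sin] at htan
  simp [secArray, sinCosArray, htan, leibnizSum_zero_left]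

/-- If `B` satisfies the Boustrophedon recurrence, then for every even `n`, the diagonal
entry `B n n` equals the `n`-th iterated derivative of `sec = fun x => (cos x)⁻¹` at `0`. -/
theorem boustrophedon_diagonal_even_eq_sec (B : ℕ → ℕ → ℝ) (h0 : B 0 0 = 1)
    (hrow : ∀ n : ℕ, B (n + 1) 0 = 0)
    (hrec : ∀ n k : ℕ, k ≤ n → B (n + 1) (k + 1) = B (n + 1) k + B n (n - k))
    (n : ℕ) (hn : Even n) :
    B n n = iteratedDeriv n (fun x => (Real.cos x)⁻¹) 0 := by
  rw [IsBoustrophedon.eq ⟨h0, hrow, hrec⟩ isBoustrophedon_secArray le_rfl, Nat.sub_self,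
    secArray_zero_right_of_even hn]
end
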